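/- With the analytic norms ‖f‖_β = sup_{ξ,η} |f̃(ξ,η)| e^{β(|ξ|+|η|)} and the free transport flow (S(t)f)(x;ξ) = f(x − tξ; ξ), if 0 < β < β' and |t| ≤ (β'−β)/β', then ‖S(t)f‖_β ≤ ‖f‖_{β'} for any integrable f on ℝ^{jd} × ℝ^{jd} with ‖f‖_{β'} < ∞. -/

import Mathlib

open MeasureTheory Complex ENNReal

/-- The symplectic Fourier transform `f̃(ξ,η) = ∫ e^{i(x·ξ − v·η)} f(x,v) dx dv`. -/
noncomputable def symplFT {n : ℕ} (f : EuclideanSpace ℝ (Fin n) × EuclideanSpace ℝ (Fin n) → ℂ)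
    (ξ η : EuclideanSpace ℝ (Fin n)) : ℂ :=
  ∫ p : EuclideanSpace ℝ (Fin n) × EuclideanSpace ℝ (Fin n),
    Complex.exp (Complex.I * (((inner ℝ p.1 ξ : ℝ) : ℂ) - ((inner ℝ p.2 η : ℝ) : ℂ))) * f p

/-- The analytic norm `‖f‖_β = sup_{ξ,η} |f̃(ξ,η)| e^{β(|ξ|+|η|)}`, valued in `ℝ≥0∞`. -/
noncomputable def analyticNorm {n : ℕ} (β : ℝ)
    (f : EuclideanSpace ℝ (Fin n) × EuclideanSpace ℝ (Fin n) → ℂ) : ℝ≥0∞ :=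
  ⨆ ξ, ⨆ η,
    ENNReal.ofReal (‖symplFT f ξ η‖ * Real.exp (β * (‖ξ‖ + ‖η‖)))

/-- The free transport flow `(S(t)f)(x;v) = f(x − t v; v)`. -/
noncomputable def freeTransport {n : ℕ} (t : ℝ)
    (f : EuclideanSpace ℝ (Fin n) × EuclideanSpace ℝ (Fin n) → ℂ) :
    EuclideanSpace ℝ (Fin n) × EuclideanSpace ℝ (Fin n) → ℂ :=
  fun p => f (p.1 - t • p.2, p.2)

/-!
The shear `(x, v) ↦ (x - t v, v)` preserves Lebesgue measure and leaves the symplectic phase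
`x·ξ − v·η` invariant once the frequency is sheared to `(ξ, η − t ξ)`, so the symplectic Fourier
transform of `S(t) f` at `(ξ, η)` is `f̃(ξ, η − t ξ)`. The weights then compare pointwise:
`|η| ≤ |η − t ξ| + |t| |ξ|` and `β (1 + |t|) ≤ β'` give `β (|ξ| + |η|) ≤ β' (|ξ| + |η − t ξ|)`.
-/

section Shear

variable {E : Type*} [NormedAddCommGroup E] [NormedSpace ℝ E]

noncomputable def shearHomeomorph (t : ℝ) : (E × E) ≃ₜ (E × E) where
  toFun p := (p.1 - t • p.2, p.2)
  invFun p := (p.1 + t • p.2, p.2)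
  left_inv p := by simp
  right_inv p := by simp
  continuous_toFun := by fun_prop
  continuous_invFun := by fun_prop

variable [MeasurableSpace E] [BorelSpace E] [SecondCountableTopology E]

theorem measurePreserving_shearHomeomorph (μ ν : Measure E) [SFinite μ] [SFinite ν]
    [μ.IsAddRightInvariant] (t : ℝ) :
    MeasurePreserving (shearHomeomorph t) (μ.prod ν) (μ.prod ν) := by
  have hskew : MeasurePreserving (fun q : E × E => (q.1, q.2 - t • q.1)) (ν.prod μ) (ν.prod μ) :=
    (MeasurePreserving.id ν).skew_product (g := fun x y => y - t • x) (by fun_prop) <|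
      .of_forall fun x => by simpa only [sub_eq_add_neg] using map_add_right_eq_self μ (-(t • x))
  exact (Measure.measurePreserving_swap.comp hskew).comp Measure.measurePreserving_swap

end Shear

theorem inner_sub_smul_sub_inner {F : Type*} [NormedAddCommGroup F] [InnerProductSpace ℝ F]
    (t : ℝ) (x v ξ η : F) :
    inner ℝ (x - t • v) ξ - inner ℝ v (η - t • ξ) = inner ℝ x ξ - inner ℝ v η := by
  rw [inner_sub_left, inner_sub_right, real_inner_smul_left, real_inner_smul_right]
  ring

theorem symplFT_freeTransport {n : ℕ} (t : ℝ)
    (f : EuclideanSpace ℝ (Fin n) × EuclideanSpace ℝ (Fin n) → ℂ) (ξ η : EuclideanSpace ℝ (Fin n)) :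
    symplFT (freeTransport t f) ξ η = symplFT f ξ (η - t • ξ) := by
  have hshear := measurePreserving_shearHomeomorph (volume : Measure (EuclideanSpace ℝ (Fin n)))
    volume t
  rw [← Measure.volume_eq_prod] at hshear
  rw [symplFT, symplFT]
  conv_rhs => rw [← hshear.integral_comp (shearHomeomorph t).measurableEmbedding]
  congr! 3 with p
  simp only [shearHomeomorph, Homeomorph.homeomorph_mk_coe, Equiv.coe_fn_mk, ← Complex.ofReal_sub,
    inner_sub_smul_sub_inner]

theorem mul_norm_add_le_mul_norm_add_sub_smul {F : Type*} [SeminormedAddCommGroup F]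
    [NormedSpace ℝ F] {β β' t : ℝ} (hβ : 0 ≤ β) (h : β * (1 + |t|) ≤ β') (ξ η : F) :
    β * (‖ξ‖ + ‖η‖) ≤ β' * (‖ξ‖ + ‖η - t • ξ‖) := by
  have hη : ‖η‖ ≤ ‖η - t • ξ‖ + |t| * ‖ξ‖ := by
    simpa only [norm_smul, Real.norm_eq_abs] using norm_le_norm_sub_add η (t • ξ)
  have hββ' : β ≤ β' := by linarith [mul_nonneg hβ (abs_nonneg t)]
  calc β * (‖ξ‖ + ‖η‖) ≤ β * (1 + |t|) * ‖ξ‖ + β * ‖η - t • ξ‖ := by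
        linarith [mul_le_mul_of_nonneg_left hη hβ]
    _ ≤ β' * (‖ξ‖ + ‖η - t • ξ‖) := by
      rw [mul_add β']
      gcongr

theorem analyticNorm_freeTransport_le_general {n : ℕ} (β β' t : ℝ)
    (hβ : 0 < β) (hββ' : β < β') (ht : |t| ≤ (β' - β) / β')
    (f : EuclideanSpace ℝ (Fin n) × EuclideanSpace ℝ (Fin n) → ℂ) :
    analyticNorm β (freeTransport t f) ≤ analyticNorm β' f := by
  have hweight : β * (1 + |t|) ≤ β' := by
    have hβ' : 0 < β' := hβ.trans hββ'
    have : |t| * β' ≤ β' - β := (le_div_iff₀ hβ').mp ht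
    linarith [mul_le_mul_of_nonneg_right hββ'.le (abs_nonneg t)]
  refine iSup₂_le fun ξ η => ?_
  rw [symplFT_freeTransport]
  refine le_iSup₂_of_le ξ (η - t • ξ) ?_
  gcongr ENNReal.ofReal (_ * Real.exp ?_)
  exact mul_norm_add_le_mul_norm_add_sub_smul hβ.le hweight ξ η

theorem analyticNorm_freeTransport_le {n : ℕ} (β β' t : ℝ)
    (hβ : 0 < β) (hββ' : β < β') (ht : |t| ≤ (β' - β) / β')
    (f : EuclideanSpace ℝ (Fin n) × EuclideanSpace ℝ (Fin n) → ℂ)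
    (hf : Integrable f) (hfin : analyticNorm β' f < ⊤) :
    analyticNorm β (freeTransport t f) ≤ analyticNorm β' f :=
  analyticNorm_freeTransport_le_general β β' t hβ hββ' ht f
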